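/- Let q ∈ ℂ \ {0} with |q| ≠ 1, let n ∈ ℕ, and let P be a nonzero polynomial with deg P ≥ n and canonical q-chain factorization P(z) = A ∏_{j=1}^{N}[z - z_j]_q^{n_j}. Then gcd(P, D_q P, ..., D_q^n P) = ∏_{j=1}^{N}[z - z_j]_q^{max(n_j - n, 0)} up to constant multiple, and consequently deg(gcd(P, D_q P, ..., D_q^n P)) = Σ_{j=1}^{N} max(n_j - n, 0). -/

import Mathlib

open Polynomial

noncomputable section

/-- q-number [n]_q = 1 + q + ... + q^{n-1}. -/
def qNum (q : ℂ) (n : ℕ) : ℂ := ∑ i ∈ Finset.range n, q ^ i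

/-- q-factorial. -/
def qFact (q : ℂ) (n : ℕ) : ℂ := ∏ i ∈ Finset.range n, qNum q (i + 1)

/-- q-binomial coefficient. -/
def qBinom (q : ℂ) (k j : ℕ) : ℂ := qFact q k / (qFact q j * qFact q (k - j))

/-- q-derivative of a function. -/
def Dqf (q : ℂ) (f : ℂ → ℂ) : ℂ → ℂ := fun z => (f (q * z) - f z) / (q * z - z)

/-- q-analogue of the power (z-w)^n : [z-w]_q^n = (z-w)(z-qw)...(z-q^{n-1}w). -/
def qPow (q w : ℂ) (n : ℕ) : Polynomial ℂ := ∏ i ∈ Finset.range n, (X - C (q ^ i * w))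

/-- q-derivative as a polynomial operation. -/
def qDeriv (q : ℂ) (f : Polynomial ℂ) : Polynomial ℂ :=
  C (q - 1)⁻¹ * ((f.comp (C q * X) - f) /ₘ X)

/-- `w` is a zero of `f` with q-weight `n`. -/
def IsZeroQWeight (q : ℂ) (f : Polynomial ℂ) (w : ℂ) (n : ℕ) : Prop :=
  (w = 0 ∧ f ≠ 0 ∧ Polynomial.rootMultiplicity 0 f = n) ∨
  (w ≠ 0 ∧ (∀ k < n, f.eval (q ^ k * w) = 0) ∧ f.eval (q ^ n * w) ≠ 0)

/-- Canonical q-chain factorization of a polynomial. -/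
structure QFactorization (q : ℂ) (P : Polynomial ℂ) where
  N : ℕ
  z : Fin N → ℂ
  n : Fin N → ℕ
  A : ℂ
  A_ne : A ≠ 0
  n_pos : ∀ j, 1 ≤ n j
  eq : P = Polynomial.C A * ∏ j, qPow q (z j) (n j)
  deg_sum : ∑ j, n j = P.natDegree
  chain : ∀ j : Fin N,
    IsZeroQWeight q (∏ k ∈ Finset.univ.filter (fun k => j ≤ k), qPow q (z k) (n k)) (z j) (n j)
  maximal : ∀ j : Fin N, z j ≠ 0 →
    (∏ k ∈ Finset.univ.filter (fun k => j ≤ k), qPow q (z k) (n k)).eval (q⁻¹ * z j) ≠ 0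

/-- q-difference radical associated to a canonical factorization. -/
def radQ {q : ℂ} {P : Polynomial ℂ} (F : QFactorization q P) : Polynomial ℂ :=
  ∏ j, (X - C (F.z j))

local instance : DecidableEq (Polynomial ℂ) := Classical.decEq _

/-- Truncated q-radical of level μ. -/
def radTruncQ {q : ℂ} {P : Polynomial ℂ} (F : QFactorization q P) (μ : ℕ) : Polynomial ℂ :=
  EuclideanDomain.gcd (∏ j, qPow q (F.z j) (F.n j)) (∏ j, qPow q (F.z j) μ)

/-- f and g have a nonconstant common q-divisor. -/
def HasCommonQDivisor (q : ℂ) (f g : Polynomial ℂ) : Prop :=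
  ∃ (z₀ z₁ z₂ : ℂ) (m n : ℕ) (F G : Polynomial ℂ), 1 ≤ m ∧ 1 ≤ n ∧
    f = qPow q z₁ m * F ∧ g = qPow q z₂ n * G ∧ (z₀ = z₁ ∨ z₀ = z₂) ∧
    f * g = qPow q z₀ (m + n) * (F * G)

/-- q-shifted power [P]_q^n(z) = P(z)P(qz)...(P(q^{n-1}z)). -/
def qShiftPow (q : ℂ) (P : Polynomial ℂ) (n : ℕ) : Polynomial ℂ :=
  ∏ i ∈ Finset.range n, P.comp (C (q ^ i) * X)

/-- gcd of a list of polynomials. -/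
def gcdList (l : List (Polynomial ℂ)) : Polynomial ℂ := l.foldr EuclideanDomain.gcd 0

/-!
For `u ≠ 0`, the identity `(q - 1) z D_q f(z) = f(qz) - f(z)` shows that `(z - u)^M` divides
`f, D_q f, …, D_q^n f` exactly when `(z - q^j u)^M` divides `f` for every `j ≤ n`; so the
multiplicity of `u` in the gcd is the least multiplicity of `P` on the window
`u, qu, …, q^n u`. As `|q| ≠ 1`, every chain `[z - z_j]_q^{n_j}` is squarefree, and that
multiplicity counts the chains through a point. The conditions on a canonical factorization
force some point of the window to lie only on chains that cover the whole window, and these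
are exactly the chains through `u` of `[z - z_j]_q^{n_j - n}`.
At `u = 0`, `D_q` shifts coefficients down by one with the nonzero factors `[i + 1]_q`, and the
only chain at `0` loses exactly `n`.
-/

lemma ne_one_of_norm_ne_one {q : ℂ} (habs : ‖q‖ ≠ 1) : q ≠ 1 := by
  rintro rfl
  simp at habs

lemma pow_injective_of_norm_ne_one {q : ℂ} (hq0 : q ≠ 0) (habs : ‖q‖ ≠ 1) :
    Function.Injective (q ^ · : ℕ → ℂ) := fun a b h => by
  have h' := congrArg norm h
  simp only [norm_pow] at h'
  exact pow_right_injective₀ (norm_pos_iff.mpr hq0) habs h'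

lemma qNum_mul_sub_one (q : ℂ) (n : ℕ) : qNum q n * (q - 1) = q ^ n - 1 :=
  geom_sum_mul q n

lemma qNum_ne_zero {q : ℂ} (hq0 : q ≠ 0) (habs : ‖q‖ ≠ 1) {n : ℕ} (hn : n ≠ 0) :
    qNum q n ≠ 0 := by
  intro h
  have h' := qNum_mul_sub_one q n
  rw [h, zero_mul, eq_comm, sub_eq_zero] at h'
  exact hn (pow_injective_of_norm_ne_one hq0 habs (h'.trans (pow_zero q).symm))

lemma Polynomial.rootMultiplicity_prod {ι R : Type*} [CommRing R] [IsDomain R] {s : Finset ι}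
    {f : ι → R[X]} (h : ∏ i ∈ s, f i ≠ 0) (a : R) :
    (∏ i ∈ s, f i).rootMultiplicity a = ∑ i ∈ s, (f i).rootMultiplicity a := by
  classical
  simp only [← count_roots, roots_prod f s h, Multiset.count_bind, Finset.sum_eq_multiset_sum]

lemma Polynomial.eq_C_leadingCoeff_mul_of_forall_pow_dvd_iff {K : Type*} [Field K]
    [IsAlgClosed K] {f g : K[X]} (hf : f ≠ 0) (hg : g.Monic)
    (h : ∀ a M, (X - C a) ^ M ∣ f ↔ (X - C a) ^ M ∣ g) : f = C f.leadingCoeff * g := by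
  classical
  have hroots : f.roots = g.roots := by
    ext a
    rw [count_roots, count_roots]
    apply le_antisymm
    · rw [le_rootMultiplicity_iff hg.ne_zero, ← h]
      exact pow_rootMultiplicity_dvd _ _
    · rw [le_rootMultiplicity_iff hf, h]
      exact pow_rootMultiplicity_dvd _ _
  have hf' := (IsAlgClosed.splits f).eq_prod_roots
  rwa [hroots, ← (IsAlgClosed.splits g).eq_prod_roots_of_monic hg] at hf'

lemma Polynomial.pow_X_sub_C_dvd_comp_C_mul_X_iff {K : Type*} [Field K] {q : K} (hq0 : q ≠ 0)
    {g : K[X]} {v : K} {M : ℕ} :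
    (X - C v) ^ M ∣ g.comp (C q * X) ↔ (X - C (q * v)) ^ M ∣ g := by
  rcases eq_or_ne g 0 with rfl | hg
  · simp
  have hgq : g.comp (C q * X) ≠ 0 := by
    rwa [Ne, comp_C_mul_X_eq_zero_iff (mem_nonZeroDivisors_of_ne_zero hq0)]
  rw [← le_rootMultiplicity_iff hgq, ← le_rootMultiplicity_iff hg,
    show C q * X = C q * X + C 0 by simp,
    rootMultiplicity_comp_C_mul_X_add_C _ _ _ _ (isUnit_iff_ne_zero.mpr hq0), add_zero]

lemma dvd_gcdList_iff {d : ℂ[X]} {l : List ℂ[X]} :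
    d ∣ gcdList l ↔ ∀ x ∈ l, d ∣ x := by
  induction l with
  | nil => simp [gcdList]
  | cons a l ih =>
    rw [List.forall_mem_cons, ← ih]
    exact ⟨fun h => ⟨h.trans (EuclideanDomain.gcd_dvd_left _ _),
      h.trans (EuclideanDomain.gcd_dvd_right _ _)⟩, fun h => EuclideanDomain.dvd_gcd h.1 h.2⟩

section qDeriv

variable {q : ℂ}

lemma C_mul_X_mul_qDeriv (hq1 : q ≠ 1) (f : ℂ[X]) :
    C (q - 1) * (X * qDeriv q f) = f.comp (C q * X) - f := by
  have hX : X ∣ f.comp (C q * X) - f := by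
    rw [X_dvd_iff]
    simp
  have hdiv := modByMonic_add_div (f.comp (C q * X) - f) X
  rw [(modByMonic_eq_zero_iff_dvd monic_X).mpr hX, zero_add] at hdiv
  rw [qDeriv, mul_left_comm, ← mul_assoc (C (q - 1)), ← C_mul,
    mul_inv_cancel₀ (sub_ne_zero.mpr hq1), C_1, one_mul, hdiv]

lemma coeff_qDeriv (hq1 : q ≠ 1) (f : ℂ[X]) (i : ℕ) :
    (qDeriv q f).coeff i = qNum q (i + 1) * f.coeff (i + 1) := by
  have h := congrArg (coeff · (i + 1)) (C_mul_X_mul_qDeriv hq1 f)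
  simp only [coeff_C_mul, coeff_X_mul, coeff_sub, comp_C_mul_X_coeff] at h
  apply mul_left_cancel₀ (sub_ne_zero.mpr hq1)
  rw [h, ← mul_assoc, mul_comm (q - 1), qNum_mul_sub_one]
  ring

lemma coeff_iterate_qDeriv_eq_zero_iff (hq0 : q ≠ 0) (habs : ‖q‖ ≠ 1) (f : ℂ[X])
    (k i : ℕ) :
    ((qDeriv q)^[k] f).coeff i = 0 ↔ f.coeff (i + k) = 0 := by
  induction k generalizing i with
  | zero => rfl
  | succ k ih =>
    rw [Function.iterate_succ_apply', coeff_qDeriv (ne_one_of_norm_ne_one habs), mul_eq_zero,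
      or_iff_right (qNum_ne_zero hq0 habs i.succ_ne_zero), ih, add_assoc, add_comm 1 k]

lemma forall_X_pow_dvd_iterate_qDeriv_iff (hq0 : q ≠ 0) (habs : ‖q‖ ≠ 1) {f : ℂ[X]}
    (hf : f ≠ 0) (n M : ℕ) :
    (∀ k ≤ n, X ^ M ∣ (qDeriv q)^[k] f) ↔ M ≤ f.rootMultiplicity 0 - n := by
  simp only [X_pow_dvd_iff, coeff_iterate_qDeriv_eq_zero_iff hq0 habs,
    rootMultiplicity_eq_natTrailingDegree']
  constructor
  · intro h
    by_contra hlt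
    set t := f.natTrailingDegree
    have hd := h (min n t) (min_le_left _ _) (t - min n t) (by omega)
    rw [Nat.sub_add_cancel (min_le_right _ _)] at hd
    exact trailingCoeff_nonzero_iff_nonzero.mpr hf hd
  · intro h k hk d hd
    exact coeff_eq_zero_of_lt_natTrailingDegree (by omega)

lemma pow_X_sub_C_dvd_qDeriv_iff (hq0 : q ≠ 0) (hq1 : q ≠ 1) {g : ℂ[X]} {v : ℂ}
    (hv : v ≠ 0) {M : ℕ} (hg : (X - C v) ^ M ∣ g) :
    (X - C v) ^ M ∣ qDeriv q g ↔ (X - C (q * v)) ^ M ∣ g := by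
  have hcop : IsCoprime ((X - C v) ^ M) X := by
    simpa using (isCoprime_X_sub_C_of_isUnit_sub (a := v) (b := 0) (by simpa using hv)).pow_left
  rw [← pow_X_sub_C_dvd_comp_C_mul_X_iff hq0, ← dvd_sub_left (b := g.comp (C q * X)) hg,
    ← C_mul_X_mul_qDeriv hq1, (isUnit_C.mpr (sub_ne_zero.mpr hq1).isUnit).dvd_mul_left]
  exact ⟨fun h => h.mul_left X, hcop.dvd_of_dvd_mul_left⟩

lemma forall_pow_X_sub_C_dvd_iterate_qDeriv_iff (hq0 : q ≠ 0) (hq1 : q ≠ 1) {f : ℂ[X]}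
    {u : ℂ} (hu : u ≠ 0) (n M : ℕ) :
    (∀ k ≤ n, (X - C u) ^ M ∣ (qDeriv q)^[k] f) ↔
      ∀ j ≤ n, (X - C (q ^ j * u)) ^ M ∣ f := by
  have hstep : ∀ j g, (X - C (q ^ j * u)) ^ M ∣ g →
      ((X - C (q ^ j * u)) ^ M ∣ qDeriv q g ↔ (X - C (q ^ (j + 1) * u)) ^ M ∣ g) := by
    intro j g hg
    rw [pow_succ', mul_assoc]
    exact pow_X_sub_C_dvd_qDeriv_iff hq0 hq1 (mul_ne_zero (pow_ne_zero j hq0) hu) hg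
  constructor
  · intro h
    have key : ∀ j k, j + k ≤ n → (X - C (q ^ j * u)) ^ M ∣ (qDeriv q)^[k] f := by
      intro j
      induction j with
      | zero => intro k hk; simpa using h k (by omega)
      | succ j ih =>
        intro k hk
        rw [← hstep j _ (ih k (by omega)), ← Function.iterate_succ_apply' (qDeriv q)]
        exact ih (k + 1) (by omega)
    exact fun j hj => key j 0 (by omega)
  · intro h
    have key : ∀ k j, k + j ≤ n → (X - C (q ^ j * u)) ^ M ∣ (qDeriv q)^[k] f := by
      intro k
      induction k with
      | zero => intro j hj; exact h j (by omega)
      | succ k ih =>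
        intro j hj
        rw [Function.iterate_succ_apply', hstep j _ (ih j (by omega))]
        exact ih (j + 1) (by omega)
    exact fun k hk => by simpa using key k 0 (by omega)

end qDeriv

section qPow

variable {q : ℂ}

lemma monic_qPow (q w : ℂ) (m : ℕ) : (qPow q w m).Monic :=
  monic_prod_of_monic _ _ fun _ _ => monic_X_sub_C _

lemma natDegree_qPow (q w : ℂ) (m : ℕ) : (qPow q w m).natDegree = m := by
  rw [qPow, natDegree_prod_of_monic _ _ fun _ _ => monic_X_sub_C _]
  simp only [natDegree_X_sub_C, Finset.sum_const, Finset.card_range, smul_eq_mul, mul_one]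

lemma monic_prod_qPow {ι : Type*} (s : Finset ι) (w : ι → ℂ) (m : ι → ℕ) :
    (∏ j ∈ s, qPow q (w j) (m j)).Monic :=
  monic_prod_of_monic _ _ fun _ _ => monic_qPow _ _ _

lemma natDegree_prod_qPow {ι : Type*} (s : Finset ι) (w : ι → ℂ) (m : ι → ℕ) :
    (∏ j ∈ s, qPow q (w j) (m j)).natDegree = ∑ j ∈ s, m j := by
  simp [natDegree_prod_of_monic _ _ fun _ _ => monic_qPow _ _ _, natDegree_qPow]

lemma rootMultiplicity_prod_qPow {ι : Type*} (s : Finset ι) (w : ι → ℂ) (m : ι → ℕ)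
    (v : ℂ) :
    (∏ j ∈ s, qPow q (w j) (m j)).rootMultiplicity v
      = ∑ j ∈ s, (qPow q (w j) (m j)).rootMultiplicity v :=
  rootMultiplicity_prod (monic_prod_qPow s w m).ne_zero v

lemma roots_qPow (q w : ℂ) (m : ℕ) :
    (qPow q w m).roots = (Multiset.range m).map (q ^ · * w) := by
  conv_rhs => rw [← roots_multiset_prod_X_sub_C ((Multiset.range m).map (q ^ · * w))]
  rw [Multiset.map_map, qPow, Finset.prod_eq_multiset_prod, Finset.range_val]
  rfl

lemma rootMultiplicity_qPow_pos_iff {w v : ℂ} {m : ℕ} :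
    0 < (qPow q w m).rootMultiplicity v ↔ ∃ i < m, q ^ i * w = v := by
  rw [rootMultiplicity_pos (monic_qPow q w m).ne_zero, IsRoot, qPow, eval_prod,
    Finset.prod_eq_zero_iff]
  simp [sub_eq_zero, eq_comm]

lemma rootMultiplicity_qPow_le_one (hq0 : q ≠ 0) (habs : ‖q‖ ≠ 1) {v : ℂ} (hv : v ≠ 0)
    (w : ℂ) (m : ℕ) : (qPow q w m).rootMultiplicity v ≤ 1 := by
  classical
  rw [← count_roots, roots_qPow]
  rcases eq_or_ne w 0 with rfl | hw
  · rw [Multiset.count_eq_zero.mpr (by simpa using fun h => hv (Multiset.eq_of_mem_replicate h))]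
    exact zero_le_one
  · exact Multiset.nodup_iff_count_le_one.mp ((Multiset.nodup_range m).map
      fun a b h => pow_injective_of_norm_ne_one hq0 habs (mul_right_cancel₀ hw h)) v

lemma rootMultiplicity_qPow_le_of_imp (hq0 : q ≠ 0) (habs : ‖q‖ ≠ 1) {v v' w w' : ℂ}
    (hv : v ≠ 0) {m m' : ℕ} (h : (∃ i < m, q ^ i * w = v) → ∃ i < m', q ^ i * w' = v') :
    (qPow q w m).rootMultiplicity v ≤ (qPow q w' m').rootMultiplicity v' := by
  have h₁ := rootMultiplicity_qPow_le_one hq0 habs hv w m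
  have h₂ := mt (rootMultiplicity_qPow_pos_iff.mpr ∘ h ∘ rootMultiplicity_qPow_pos_iff.mp)
  omega

lemma rootMultiplicity_zero_qPow_zero (q : ℂ) (m : ℕ) :
    (qPow q 0 m).rootMultiplicity 0 = m := by
  simp [qPow, rootMultiplicity_eq_natTrailingDegree']

lemma rootMultiplicity_zero_qPow_of_ne_zero (hq0 : q ≠ 0) {w : ℂ} (hw : w ≠ 0) (m : ℕ) :
    (qPow q w m).rootMultiplicity 0 = 0 := by
  by_contra h
  obtain ⟨i, -, hi⟩ := rootMultiplicity_qPow_pos_iff.mp (Nat.pos_of_ne_zero h)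
  exact mul_ne_zero (pow_ne_zero i hq0) hw hi

end qPow

lemma exists_window_boundary {q : ℂ} (hq0 : q ≠ 0) {u w : ℂ} {m n i k : ℕ} (hi : i < m)
    (hk : k ≤ n) (hwu : q ^ i * w = q ^ k * u) (hncov : ∀ i' < m - n, q ^ i' * w ≠ u) :
    ∃ p ≤ n, q ^ p * u = q ^ m * w ∨ q ^ p * u = q⁻¹ * w := by
  rcases le_or_gt k i with hki | hik
  · have hu : u = q ^ (i - k) * w := by
      apply mul_left_cancel₀ (pow_ne_zero k hq0)
      rw [← hwu, ← mul_assoc, ← pow_add, Nat.add_sub_cancel' hki]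
    have hm : m ≤ i - k + n := by
      by_contra! h
      exact hncov (i - k) (by omega) hu.symm
    refine ⟨m - (i - k), by omega, Or.inl ?_⟩
    rw [hu, ← mul_assoc, ← pow_add, Nat.sub_add_cancel (by omega)]
  · have hw : w = q ^ (k - i) * u := by
      apply mul_left_cancel₀ (pow_ne_zero i hq0)
      rw [hwu, ← mul_assoc, ← pow_add, Nat.add_sub_cancel' hik.le]
    obtain ⟨d, hd⟩ : ∃ d, k - i = d + 1 := ⟨k - i - 1, by omega⟩
    refine ⟨d, by omega, Or.inr ?_⟩
    rw [hw, hd, pow_succ', ← mul_assoc, ← mul_assoc, inv_mul_cancel₀ hq0, one_mul]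

namespace QFactorization

variable {q : ℂ} {P : ℂ[X]} (F : QFactorization q P)

/-- The factor that remains when `z j` is extracted; `F.chain` and `F.maximal` speak about it. -/
def tail (j : Fin F.N) : ℂ[X] :=
  ∏ k ∈ Finset.univ.filter (fun k => j ≤ k), qPow q (F.z k) (F.n k)

lemma ne_zero (F : QFactorization q P) : P ≠ 0 := by
  rw [F.eq]
  exact mul_ne_zero (C_ne_zero.mpr F.A_ne) (monic_prod_qPow _ _ _).ne_zero

lemma rootMultiplicity_eq_sum (v : ℂ) :
    P.rootMultiplicity v = ∑ j, (qPow q (F.z j) (F.n j)).rootMultiplicity v := by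
  conv_lhs => rw [F.eq]
  rw [rootMultiplicity_mul (F.eq ▸ F.ne_zero), rootMultiplicity_C, zero_add,
    rootMultiplicity_prod_qPow]

lemma eval_tail_eq_zero {j k : Fin F.N} (hjk : j ≤ k) {v : ℂ}
    (hv : ∃ i < F.n k, q ^ i * F.z k = v) : (F.tail j).eval v = 0 := by
  obtain ⟨i, hi, rfl⟩ := hv
  rw [tail, eval_prod]
  refine Finset.prod_eq_zero (Finset.mem_filter.mpr ⟨Finset.mem_univ _, hjk⟩) ?_
  rw [qPow, eval_prod]
  exact Finset.prod_eq_zero (Finset.mem_range.mpr hi) (by simp)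

lemma eval_tail_ne_zero {j : Fin F.N} (hz : F.z j ≠ 0) :
    (F.tail j).eval (q ^ F.n j * F.z j) ≠ 0 := by
  rcases F.chain j with ⟨hz', -⟩ | ⟨-, -, h⟩
  · exact absurd hz' hz
  · exact h

lemma rootMultiplicity_zero_tail {j : Fin F.N} (hz : F.z j = 0) :
    (F.tail j).rootMultiplicity 0 = F.n j := by
  rcases F.chain j with ⟨-, -, h⟩ | ⟨hz', -⟩
  · exact h
  · exact absurd hz hz'

lemma eq_of_z_eq_zero {j j' : Fin F.N} (hj : F.z j = 0) (hj' : F.z j' = 0) : j = j' := by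
  suffices ∀ j j', F.z j = 0 → F.z j' = 0 → ¬ j < j' by
    by_contra hne
    rcases lt_or_gt_of_ne hne with h | h
    exacts [this j j' hj hj' h, this j' j hj' hj h]
  intro j j' hj hj' hlt
  have hpair : ({j, j'} : Finset _) ⊆ Finset.univ.filter (fun k => j ≤ k) := by
    intro k hk
    rcases Finset.mem_insert.mp hk with rfl | hk
    · simp
    · simp [Finset.mem_singleton.mp hk, hlt.le]
  have hsum := Finset.sum_le_sum_of_subset
    (f := fun k => (qPow q (F.z k) (F.n k)).rootMultiplicity 0) hpair
  rw [Finset.sum_pair hlt.ne, ← rootMultiplicity_prod_qPow, ← tail,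
    F.rootMultiplicity_zero_tail hj, hj, hj', rootMultiplicity_zero_qPow_zero,
    rootMultiplicity_zero_qPow_zero] at hsum
  have := F.n_pos j'
  omega

lemma rootMultiplicity_zero_prod_qPow_sub (hq0 : q ≠ 0) (n : ℕ) :
    (∏ j, qPow q (F.z j) (F.n j - n)).rootMultiplicity 0 = P.rootMultiplicity 0 - n := by
  rw [F.rootMultiplicity_eq_sum, rootMultiplicity_prod_qPow]
  by_cases h : ∃ j₀, F.z j₀ = 0
  · obtain ⟨j₀, hj₀⟩ := h
    have hother : ∀ (m : Fin F.N → ℕ) (j : Fin F.N), j ≠ j₀ →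
        (qPow q (F.z j) (m j)).rootMultiplicity 0 = 0 := fun m j hj =>
      rootMultiplicity_zero_qPow_of_ne_zero hq0 (fun hz => hj (F.eq_of_z_eq_zero hz hj₀)) _
    rw [Finset.sum_eq_single_of_mem j₀ (Finset.mem_univ _) fun j _ => hother (F.n · - n) j,
      Finset.sum_eq_single_of_mem j₀ (Finset.mem_univ _) fun j _ => hother F.n j, hj₀,
      rootMultiplicity_zero_qPow_zero, rootMultiplicity_zero_qPow_zero]
  · simp [rootMultiplicity_zero_qPow_of_ne_zero hq0 (not_exists.mp h _)]

lemma exists_window_point_only_on_covering_chains (hq0 : q ≠ 0) {u : ℂ} (hu : u ≠ 0)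
    (n : ℕ) :
    ∃ p ≤ n, ∀ j, (∃ i < F.n j, q ^ i * F.z j = q ^ p * u) →
      ∃ i < F.n j - n, q ^ i * F.z j = u := by
  classical
  by_contra! hbad
  -- The first chain that meets the window without covering it: the tail from there on vanishes
  -- on the whole window, which contradicts `chain` or `maximal` at one end of that chain.
  let T := Finset.univ.filter fun j => (∀ i < F.n j - n, q ^ i * F.z j ≠ u) ∧
    ∃ p ≤ n, ∃ i < F.n j, q ^ i * F.z j = q ^ p * u
  have hmem : ∀ p ≤ n, ∃ j ∈ T, ∃ i < F.n j, q ^ i * F.z j = q ^ p * u := by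
    intro p hp
    obtain ⟨j, hj, hncov⟩ := hbad p hp
    exact ⟨j, Finset.mem_filter.mpr ⟨Finset.mem_univ _, hncov, p, hp, hj⟩, hj⟩
  obtain ⟨j, hjT, -⟩ := hmem 0 n.zero_le
  have hT : T.Nonempty := ⟨j, hjT⟩
  obtain ⟨hncov, k, hk, i, hi, hik⟩ := (Finset.mem_filter.mp (T.min'_mem hT)).2
  have hz : F.z (T.min' hT) ≠ 0 := by
    intro hz
    rw [hz, mul_zero] at hik
    exact mul_ne_zero (pow_ne_zero k hq0) hu hik.symm
  have hvanish : ∀ p ≤ n, (F.tail (T.min' hT)).eval (q ^ p * u) = 0 := by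
    intro p hp
    obtain ⟨j, hjT, hj⟩ := hmem p hp
    exact F.eval_tail_eq_zero (T.min'_le j hjT) hj
  obtain ⟨p, hp, hend | hstart⟩ := exists_window_boundary hq0 hi hk hik hncov
  · exact F.eval_tail_ne_zero hz (hend ▸ hvanish p hp)
  · exact F.maximal _ hz (hstart ▸ hvanish p hp)

lemma forall_le_rootMultiplicity_iff (hq0 : q ≠ 0) (habs : ‖q‖ ≠ 1) {u : ℂ} (hu : u ≠ 0)
    (n M : ℕ) : (∀ j ≤ n, M ≤ P.rootMultiplicity (q ^ j * u)) ↔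
      M ≤ (∏ k, qPow q (F.z k) (F.n k - n)).rootMultiplicity u := by
  simp only [F.rootMultiplicity_eq_sum, rootMultiplicity_prod_qPow]
  constructor
  · intro h
    obtain ⟨p, hp, hcov⟩ := F.exists_window_point_only_on_covering_chains hq0 hu n
    exact (h p hp).trans (Finset.sum_le_sum fun k _ => rootMultiplicity_qPow_le_of_imp hq0 habs
      (mul_ne_zero (pow_ne_zero _ hq0) hu) (hcov k))
  · intro h j hj
    refine h.trans (Finset.sum_le_sum fun k _ => rootMultiplicity_qPow_le_of_imp hq0 habs hu ?_)
    rintro ⟨i, hi, rfl⟩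
    exact ⟨i + j, by omega, by ring⟩

end QFactorization

theorem gcd_qDeriv_iterates_general (q : ℂ) (hq0 : q ≠ 0) (habs : ‖q‖ ≠ 1) (n : ℕ)
    (P : Polynomial ℂ) (F : QFactorization q P) :
    ∃ cc : ℂ, cc ≠ 0 ∧
      gcdList (((List.range (n + 1)).map (fun k => (qDeriv q)^[k] P)))
        = C cc * ∏ j, qPow q (F.z j) (F.n j - n) ∧
      (gcdList (((List.range (n + 1)).map (fun k => (qDeriv q)^[k] P)))).natDegree
        = ∑ j, (F.n j - n) := by
  set G := gcdList ((List.range (n + 1)).map fun k => (qDeriv q)^[k] P)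
  have hdvd : ∀ d, d ∣ G ↔ ∀ k ≤ n, d ∣ (qDeriv q)^[k] P := fun d => by
    simp only [G, dvd_gcdList_iff, List.forall_mem_map, List.mem_range, Nat.lt_succ_iff]
  have hG : G ≠ 0 := fun h =>
    F.ne_zero (zero_dvd_iff.mp (h ▸ (hdvd G).mp dvd_rfl 0 n.zero_le))
  have hΦ := monic_prod_qPow (q := q) Finset.univ F.z (F.n · - n)
  have hGΦ : G = C G.leadingCoeff * ∏ j, qPow q (F.z j) (F.n j - n) := by
    refine eq_C_leadingCoeff_mul_of_forall_pow_dvd_iff hG hΦ fun u M => ?_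
    rw [hdvd, ← le_rootMultiplicity_iff hΦ.ne_zero]
    rcases eq_or_ne u 0 with rfl | hu
    · rw [map_zero, sub_zero, forall_X_pow_dvd_iterate_qDeriv_iff hq0 habs F.ne_zero,
        F.rootMultiplicity_zero_prod_qPow_sub hq0]
    · simp only [forall_pow_X_sub_C_dvd_iterate_qDeriv_iff hq0 (ne_one_of_norm_ne_one habs) hu,
        ← le_rootMultiplicity_iff F.ne_zero]
      exact F.forall_le_rootMultiplicity_iff hq0 habs hu n M
  refine ⟨G.leadingCoeff, leadingCoeff_ne_zero.mpr hG, hGΦ, ?_⟩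
  rw [hGΦ, natDegree_C_mul (leadingCoeff_ne_zero.mpr hG), natDegree_prod_qPow]

/-- gcd(P, D_q P, ..., D_q^n P) via the canonical factorization. -/
theorem gcd_qDeriv_iterates (q : ℂ) (hq0 : q ≠ 0) (habs : ‖q‖ ≠ 1) (n : ℕ)
    (P : Polynomial ℂ) (F : QFactorization q P) (hn : n ≤ P.natDegree) :
    ∃ cc : ℂ, cc ≠ 0 ∧
      gcdList (((List.range (n + 1)).map (fun k => (qDeriv q)^[k] P)))
        = C cc * ∏ j, qPow q (F.z j) (F.n j - n) ∧
      (gcdList (((List.range (n + 1)).map (fun k => (qDeriv q)^[k] P)))).natDegree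
        = ∑ j, (F.n j - n) :=
  gcd_qDeriv_iterates_general q hq0 habs n P F
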